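/- arXiv:1202.6467 — 6 statements merged into one kernel-verified Lean document; each statement's English description precedes it below -/
import Mathlib

section
/- Let Γ ↷ X be an amenable action of a countable group on a countable set. If the action has infinite orbits, then there exists a Følner sequence (C_n) for the action such that |C_n| → ∞. -/
/-- `C` is a Følner sequence for the action of `G` on `X` given by `π`. -/
def IsFolnerSeq {G X : Type*} [Group G] (π : G →* Equiv.Perm X) (C : ℕ → Set X) : Prop :=
  (∀ n, (C n).Finite ∧ (C n).Nonempty) ∧
    ∀ g : G, Filter.Tendsto
      (fun n => ((symmDiff (C n) (π g '' C n)).ncard : ℝ) / (C n).ncard)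
      Filter.atTop (nhds 0)

/-- The action of `G` on `X` given by `π` is amenable (admits a Følner sequence). -/
def IsAmenableAction {G X : Type*} [Group G] (π : G →* Equiv.Perm X) : Prop :=
  ∃ C : ℕ → Set X, IsFolnerSeq π C

/-- The action given by `π` has infinite orbits. -/
def HasInfiniteOrbits {G X : Type*} [Group G] (π : G →* Equiv.Perm X) : Prop :=
  ∀ x : X, {y : X | ∃ g : G, π g x = y}.Infinite

/-- The action given by `π` is transitive. -/
def IsTransitiveAction {G X : Type*} [Group G] (π : G →* Equiv.Perm X) : Prop :=
  ∀ x y : X, ∃ g : G, π g x = y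

/-- The action given by `π` is almost free: every non-trivial element has finitely many
fixed points. -/
def IsAlmostFreeAction {G X : Type*} [Group G] (π : G →* Equiv.Perm X) : Prop :=
  ∀ g : G, g ≠ 1 → {x : X | π g x = x}.Finite

/-- The class 𝒜 of countable groups admitting a faithful, transitive and amenable action
on an infinite countable set. -/
def InClassA (G : Type*) [Group G] : Prop :=
  ∃ (X : Type) (_ : Countable X) (_ : Infinite X) (π : G →* Equiv.Perm X),
    Function.Injective π ∧ IsTransitiveAction π ∧ IsAmenableAction π

/-- The class 𝒜_ℱ of countable groups admitting an amenable, almost free action with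
infinite orbits on a countable set. -/
def InClassAF (G : Type*) [Group G] : Prop :=
  ∃ (X : Type) (_ : Countable X) (π : G →* Equiv.Perm X),
    IsAmenableAction π ∧ IsAlmostFreeAction π ∧ HasInfiniteOrbits π

/-!
If the Følner sets are frequently larger than `m`, a late one is large and almost invariant.
Otherwise they are eventually of size at most `m`, and then `1/(m+1)`-almost invariance under
`g` forces exact invariance under `g`. With infinite orbits no finite nonempty set is invariant
under all of `Γ`, so by pigeonhole the late Følner sets do not all lie in one finite set; a union
of `m + 1` late ones is then exactly invariant under a given finite `S` and has more than `m`
points. A diagonal argument along an enumeration of `Γ` produces the sequence.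
-/

open Filter Set

theorem image_eq_self_of_ncard_symmDiff_div_lt {X : Type*} {f : X → X} {A : Set X} {k : ℕ}
    (hA : A.Finite) (hk : A.ncard ≤ k)
    (h : ((symmDiff A (f '' A)).ncard : ℝ) / A.ncard < 1 / (k + 1)) : f '' A = A := by
  rcases A.eq_empty_or_nonempty with rfl | hne
  · exact image_empty f
  have hpos : (0 : ℝ) < A.ncard := by exact_mod_cast (ncard_pos hA).2 hne
  have hlt : ((symmDiff A (f '' A)).ncard : ℝ) < 1 := by
    rw [div_lt_iff₀ hpos] at h
    calc _ < 1 / (k + 1) * (A.ncard : ℝ) := h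
      _ ≤ 1 / (k + 1) * k := by gcongr
      _ < 1 := by rw [one_div_mul_eq_div, div_lt_one (by positivity)]; linarith
  have hfin : (symmDiff A (f '' A)).Finite := (hA.union (hA.image f)).subset symmDiff_le_sup
  have hempty : symmDiff A (f '' A) = ∅ :=
    (ncard_eq_zero hfin).1 (Nat.lt_one_iff.1 (by exact_mod_cast hlt))
  exact (symmDiff_eq_bot.1 hempty).symm

section

variable {Γ X : Type*} [Group Γ] {π : Γ →* Equiv.Perm X}

variable (π) in
def IsAlmostInvariant (S : Set Γ) (ε : ℝ) (C : Set X) : Prop :=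
  ∀ g ∈ S, ((symmDiff C (π g '' C)).ncard : ℝ) / C.ncard ≤ ε

theorem IsFolnerSeq.eventually_isAlmostInvariant {F : ℕ → Set X} (hF : IsFolnerSeq π F)
    {S : Set Γ} (hS : S.Finite) {ε : ℝ} (hε : 0 < ε) :
    ∀ᶠ n in atTop, IsAlmostInvariant π S ε (F n) :=
  (eventually_all_finite hS).2 fun g _ => (hF.2 g).eventually (Iic_mem_nhds hε)

theorem IsFolnerSeq.eventually_image_eq_of_eventually_ncard_le {F : ℕ → Set X}
    (hF : IsFolnerSeq π F) {k : ℕ} (hk : ∀ᶠ n in atTop, (F n).ncard ≤ k) (g : Γ) :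
    ∀ᶠ n in atTop, π g '' F n = F n := by
  filter_upwards [(hF.2 g).eventually (Iio_mem_nhds (by positivity : (0 : ℝ) < 1 / (k + 1))),
    hk] with n hratio hcard
  exact image_eq_self_of_ncard_symmDiff_div_lt (hF.1 n).1 hcard hratio

theorem HasInfiniteOrbits.eq_empty_of_finite_of_forall_image_eq (hinf : HasInfiniteOrbits π)
    {A : Set X} (hA : A.Finite) (hinv : ∀ g, π g '' A = A) : A = ∅ := by
  refine eq_empty_of_forall_notMem fun x hx => hinf x (hA.subset ?_)
  rintro _ ⟨g, rfl⟩
  exact hinv g ▸ mem_image_of_mem _ hx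

theorem HasInfiniteOrbits.infinite_biUnion_Ici (hinf : HasInfiniteOrbits π) {F : ℕ → Set X}
    (hne : ∀ n, (F n).Nonempty) (hinv : ∀ g, ∀ᶠ n in atTop, π g '' F n = F n) (M : ℕ) :
    (⋃ i ∈ Ici M, F i).Infinite := by
  set U := ⋃ i ∈ Ici M, F i
  intro hU
  -- A set hit frequently by `F` is invariant, hence empty, which no `F n` is.
  have hrare : ∀ A ∈ {A | A ⊆ U}, ∀ᶠ n in atTop, F n ≠ A := by
    intro A hA
    refine not_frequently.1 fun hfreq => ?_
    obtain ⟨n, rfl⟩ := hfreq.exists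
    have hAinv : ∀ g, π g '' F n = F n := fun g => by
      obtain ⟨m, hm, hmn⟩ := ((hinv g).and_frequently hfreq).exists
      rwa [hmn] at hm
    exact (hne n).ne_empty (hinf.eq_empty_of_finite_of_forall_image_eq (hU.subset hA) hAinv)
  obtain ⟨n, hn, hMn⟩ :=
    (((eventually_all_finite hU.finite_subsets).2 hrare).and (eventually_ge_atTop M)).exists
  exact hn (F n) (subset_biUnion_of_mem (u := F) (mem_Ici.2 hMn)) rfl

theorem HasInfiniteOrbits.exists_finite_invariant_lt_ncard (hinf : HasInfiniteOrbits π)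
    {F : ℕ → Set X} (hfin : ∀ n, (F n).Finite) (hne : ∀ n, (F n).Nonempty)
    (hinv : ∀ g, ∀ᶠ n in atTop, π g '' F n = F n) {S : Set Γ} (hS : S.Finite) (m : ℕ) :
    ∃ C : Set X, C.Finite ∧ m < C.ncard ∧ ∀ g ∈ S, π g '' C = C := by
  obtain ⟨M, hM⟩ := eventually_atTop.1 ((eventually_all_finite hS).2 fun g _ => hinv g)
  obtain ⟨t, ht, htfin, htcard⟩ :=
    (hinf.infinite_biUnion_Ici hne hinv M).exists_subset_ncard_eq (m + 1)
  have hcover : ∀ x ∈ t, ∃ i, M ≤ i ∧ x ∈ F i := fun x hx => by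
    simpa only [mem_iUnion, mem_Ici, exists_prop] using ht hx
  choose! idx hidx hmem using hcover
  have hCfin : (⋃ x ∈ t, F (idx x)).Finite := htfin.biUnion fun x _ => hfin (idx x)
  refine ⟨⋃ x ∈ t, F (idx x), hCfin, ?_, fun g hg => ?_⟩
  · calc m < t.ncard := by omega
      _ ≤ _ := ncard_le_ncard (fun x hx => mem_biUnion hx (hmem x hx)) hCfin
  · rw [image_iUnion₂]
    exact iUnion₂_congr fun x hx => hM _ (hidx x hx) g hg

theorem IsFolnerSeq.exists_isAlmostInvariant_lt_ncard {F : ℕ → Set X} (hF : IsFolnerSeq π F)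
    (hinf : HasInfiniteOrbits π) {S : Set Γ} (hS : S.Finite) {ε : ℝ} (hε : 0 < ε) (m : ℕ) :
    ∃ C : Set X, C.Finite ∧ m < C.ncard ∧ IsAlmostInvariant π S ε C := by
  by_cases hbig : ∃ᶠ n in atTop, m < (F n).ncard
  · obtain ⟨n, hn, hC⟩ := (hbig.and_eventually (hF.eventually_isAlmostInvariant hS hε)).exists
    exact ⟨F n, (hF.1 n).1, hn, hC⟩
  · have hsmall : ∀ᶠ n in atTop, (F n).ncard ≤ m := by
      simpa only [not_lt] using not_frequently.1 hbig
    obtain ⟨C, hCfin, hCcard, hCinv⟩ := hinf.exists_finite_invariant_lt_ncard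
      (fun n => (hF.1 n).1) (fun n => (hF.1 n).2)
      (hF.eventually_image_eq_of_eventually_ncard_le hsmall) hS m
    refine ⟨C, hCfin, hCcard, fun g hg => ?_⟩
    rw [hCinv g hg, symmDiff_self]
    simpa using hε.le

theorem exists_isFolnerSeq_tendsto_ncard_atTop [Countable Γ]
    (h : ∀ S : Set Γ, S.Finite → ∀ ε > 0, ∀ m : ℕ,
      ∃ C : Set X, C.Finite ∧ m < C.ncard ∧ IsAlmostInvariant π S ε C) :
    ∃ C : ℕ → Set X, IsFolnerSeq π C ∧ Tendsto (fun n => (C n).ncard) atTop atTop := by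
  obtain ⟨e, he⟩ := exists_surjective_nat Γ
  choose C hCfin hCcard hCinv using fun n : ℕ =>
    h (e '' Iic n) ((finite_Iic n).image e) (1 / (n + 1)) (by positivity) n
  refine ⟨C, ⟨fun n => ⟨hCfin n, nonempty_of_ncard_ne_zero (hCcard n).ne_zero⟩, fun g => ?_⟩,
    tendsto_atTop_mono (fun n => (hCcard n).le) tendsto_id⟩
  obtain ⟨j, rfl⟩ := he g
  refine squeeze_zero' (Eventually.of_forall fun n => by positivity) ?_
    tendsto_one_div_add_atTop_nhds_zero_nat
  filter_upwards [eventually_ge_atTop j] with n hn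
  exact hCinv n _ (mem_image_of_mem e (mem_Iic.2 hn))

end

theorem exists_folner_seq_card_tendsto_atTop_general
    {Γ X : Type*} [Group Γ] [Countable Γ]
    (π : Γ →* Equiv.Perm X)
    (hamen : IsAmenableAction π) (hinf : HasInfiniteOrbits π) :
    ∃ C : ℕ → Set X, IsFolnerSeq π C ∧
      Filter.Tendsto (fun n => (C n).ncard) Filter.atTop Filter.atTop := by
  obtain ⟨F, hF⟩ := hamen
  exact exists_isFolnerSeq_tendsto_ncard_atTop fun _ hS _ hε m =>
    hF.exists_isAlmostInvariant_lt_ncard hinf hS hε m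

/-- **Lemma 2.1.** Let `Γ ↷ X` be an amenable action of a countable group on a countable
set.  If the action has infinite orbits then there exists a Følner sequence `(C n)` with
`|C n| → ∞`. -/
theorem exists_folner_seq_card_tendsto_atTop
    {Γ X : Type*} [Group Γ] [Countable Γ] [Countable X]
    (π : Γ →* Equiv.Perm X)
    (hamen : IsAmenableAction π) (hinf : HasInfiniteOrbits π) :
    ∃ C : ℕ → Set X, IsFolnerSeq π C ∧
      Filter.Tendsto (fun n => (C n).ncard) Filter.atTop Filter.atTop :=
  exists_folner_seq_card_tendsto_atTop_general π hamen hinf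
end

section
/- Let Γ ↷ Y be an amenable action of a countable group on a countable set, and let Γ act on X = Y × ℕ by g·(y,n) = (g·y, n). Then for every sequence (a_n) of real numbers with a_n → ∞, there exist a Følner sequence (C_n) for Γ ↷ X and a strictly increasing map φ : ℕ → ℕ such that a_{φ(n)}/|C_n| → 1. -/
/-- The action of `Γ` on `X = Y × ℕ` given by `g • (y, n) = (g • y, n)`. -/
def prodNatHom {Γ Y : Type*} [Group Γ] (π : Γ →* Equiv.Perm Y) :
    Γ →* Equiv.Perm (Y × ℕ) where
  toFun g := (π g).prodCongr (Equiv.refl ℕ)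
  map_one' := by
    ext p
    · simp
    · simp
  map_mul' g h := by
    ext p
    · simp
    · simp

/-!
Take a Følner sequence `D n` for `Γ ↷ Y` and thicken it to `C n = D n × {0, …, m n - 1}`; the
factor `m n` cancels in the Følner ratio, so `C` is again Følner. Passing to a subsequence with
`a (φ n) ≥ (n + 1) |D n|` and taking `m n = ⌈a (φ n) / |D n|⌉`, the ratio `a (φ n) / |C n|` has
the form `x / ⌈x⌉` with `x → ∞`, hence tends to `1`.
-/

open Filter Topology

lemma Set.symmDiff_prod {α β : Type*} (s₁ s₂ : Set α) (t : Set β) :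
    symmDiff s₁ s₂ ×ˢ t = symmDiff (s₁ ×ˢ t) (s₂ ×ˢ t) := by
  ext ⟨x, y⟩
  simp only [Set.mem_symmDiff, Set.mem_prod]
  tauto

lemma prodNatHom_image_prod {Γ Y : Type*} [Group Γ] (π : Γ →* Equiv.Perm Y) (g : Γ)
    (s : Set Y) (t : Set ℕ) : prodNatHom π g '' (s ×ˢ t) = (π g '' s) ×ˢ t := by
  change Prod.map (π g) id '' (s ×ˢ t) = _
  rw [Set.prodMap_image_prod, Set.image_id]

lemma IsFolnerSeq.prod {Γ Y : Type*} [Group Γ] {π : Γ →* Equiv.Perm Y} {D : ℕ → Set Y}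
    (hD : IsFolnerSeq π D) {T : ℕ → Set ℕ} (hT : ∀ n, (T n).Finite ∧ (T n).Nonempty) :
    IsFolnerSeq (prodNatHom π) fun n => D n ×ˢ T n := by
  refine ⟨fun n => ⟨(hD.1 n).1.prod (hT n).1, (hD.1 n).2.prod (hT n).2⟩, fun g => ?_⟩
  refine (hD.2 g).congr fun n => ?_
  have hT_card : ((T n).ncard : ℝ) ≠ 0 := by
    exact_mod_cast ((hT n).2.ncard_pos (hT n).1).ne'
  rw [prodNatHom_image_prod, ← Set.symmDiff_prod, Set.ncard_prod, Set.ncard_prod,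
    Nat.cast_mul, Nat.cast_mul, mul_div_mul_right _ _ hT_card]

lemma tendsto_div_nat_ceil_of_tendsto_atTop {x : ℕ → ℝ} (hx : Tendsto x atTop atTop) :
    Tendsto (fun n => x n / ⌈x n⌉₊) atTop (𝓝 1) := by
  simpa using (tendsto_nat_ceil_div_atTop.comp hx).inv₀ one_ne_zero

theorem folner_seq_with_prescribed_cardinality_general
    {Γ Y : Type*} [Group Γ]
    (π : Γ →* Equiv.Perm Y) (hamen : IsAmenableAction π)
    (a : ℕ → ℝ) (ha : Filter.Tendsto a Filter.atTop Filter.atTop) :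
    ∃ (C : ℕ → Set (Y × ℕ)) (φ : ℕ → ℕ), StrictMono φ ∧
      IsFolnerSeq (prodNatHom π) C ∧
      Filter.Tendsto (fun n => a (φ n) / ((C n).ncard : ℝ)) Filter.atTop (nhds 1) := by
  obtain ⟨D, hD⟩ := hamen
  set d : ℕ → ℝ := fun n => ((D n).ncard : ℝ)
  have hd : ∀ n, 0 < d n := fun n => by
    simpa [d] using (hD.1 n).2.ncard_pos (hD.1 n).1
  obtain ⟨φ, hφ, hφa⟩ := extraction_forall_of_eventually fun n =>
    ha.eventually_ge_atTop ((n + 1) * d n)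
  set x : ℕ → ℝ := fun n => a (φ n) / d n
  have hx : ∀ n : ℕ, (n : ℝ) + 1 ≤ x n := fun n => (le_div_iff₀ (hd n)).2 (hφa n)
  have hx_tendsto : Tendsto x atTop atTop :=
    tendsto_atTop_mono hx (tendsto_natCast_atTop_atTop.atTop_add tendsto_const_nhds)
  refine ⟨fun n => D n ×ˢ Set.Iio ⌈x n⌉₊, φ, hφ, hD.prod fun n => ⟨Set.finite_Iio _, ?_⟩, ?_⟩
  · exact ⟨0, Nat.ceil_pos.2 (by linarith [hx n, n.cast_nonneg (α := ℝ)])⟩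
  · refine (tendsto_div_nat_ceil_of_tendsto_atTop hx_tendsto).congr fun n => ?_
    rw [Set.ncard_prod, Set.ncard_Iio_nat, Nat.cast_mul, ← div_div]

/-- **Lemma 2.4.**  Let `Γ ↷ Y` be an amenable action of a countable group on a countable
set, and let `Γ` act on `X = Y × ℕ` by `g • (y, n) = (g • y, n)`.  For every sequence
`(a n)` of reals with `a n → ∞` there exist a Følner sequence `(C n)` for `Γ ↷ X` and a
strictly increasing `φ : ℕ → ℕ` such that `a (φ n) / |C n| → 1`. -/
theorem folner_seq_with_prescribed_cardinality
    {Γ Y : Type*} [Group Γ] [Countable Γ] [Countable Y]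
    (π : Γ →* Equiv.Perm Y) (hamen : IsAmenableAction π)
    (a : ℕ → ℝ) (ha : Filter.Tendsto a Filter.atTop Filter.atTop) :
    ∃ (C : ℕ → Set (Y × ℕ)) (φ : ℕ → ℕ), StrictMono φ ∧
      IsFolnerSeq (prodNatHom π) C ∧
      Filter.Tendsto (fun n => a (φ n) / ((C n).ncard : ℝ)) Filter.atTop (nhds 1) :=
  folner_seq_with_prescribed_cardinality_general π hamen a ha
end

section
/- Let H ≤ Γ be countable groups, let H act on a countable set Y, and let Γ ↷ X be the induced action. If the action H ↷ Y has infinite orbits and H is almost malnormal in Γ, then the restriction to H of the induced action, H ↷ X, has infinite orbits. -/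
section InducedAction

variable {Γ : Type*} [Group Γ] (H : Subgroup Γ) {Y : Type*} (π : H →* Equiv.Perm Y)

/-- The equivalence relation on `Y × Γ` given by the diagonal `H`-action
`h • (y, g) = (h • y, h * g)`. -/
def indSetoid : Setoid (Y × Γ) where
  r p q := ∃ h : H, π h p.1 = q.1 ∧ (h : Γ) * p.2 = q.2
  iseqv := by
    constructor
    · intro p
      exact ⟨1, by simp, by simp⟩
    · rintro p q ⟨h, h1, h2⟩
      refine ⟨h⁻¹, ?_, ?_⟩
      · rw [← h1]; simp
      · rw [← h2]; simp [mul_assoc]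
    · rintro p q r ⟨h, h1, h2⟩ ⟨k, k1, k2⟩
      refine ⟨k * h, ?_, ?_⟩
      · rw [← k1, ← h1]; simp
      · rw [← k2, ← h2]; simp [mul_assoc]

/-- The underlying set `X = H \ (Y × Γ)` of the induced action. -/
def IndSpace : Type _ := Quotient (indSetoid H π)

/-- The induced action of `Γ` on `X = H \ (Y × Γ)`, given by `γ • [y, g] = [y, g * γ⁻¹]`. -/
def indHom : Γ →* Equiv.Perm (IndSpace H π) where
  toFun γ :=
    { toFun := Quotient.map' (fun p => (p.1, p.2 * γ⁻¹))
        (by rintro p q ⟨h, h1, h2⟩; exact ⟨h, h1, by show (h : Γ) * (p.2 * _) = q.2 * _; rw [← h2, mul_assoc]⟩)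
      invFun := Quotient.map' (fun p => (p.1, p.2 * γ))
        (by rintro p q ⟨h, h1, h2⟩; exact ⟨h, h1, by show (h : Γ) * (p.2 * _) = q.2 * _; rw [← h2, mul_assoc]⟩)
      left_inv := by
        intro x
        induction x using Quotient.inductionOn' with
        | h p => simp [Quotient.map'_mk'', mul_assoc]; rfl
      right_inv := by
        intro x
        induction x using Quotient.inductionOn' with
        | h p => simp [Quotient.map'_mk'', mul_assoc]; rfl }
  map_one' := by
    apply Equiv.ext
    intro x
    induction x using Quotient.inductionOn' with
    | h p => show Quotient.mk'' (p.1, p.2 * 1⁻¹) = Quotient.mk'' p; simp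
  map_mul' γ₁ γ₂ := by
    apply Equiv.ext
    intro x
    induction x using Quotient.inductionOn' with
    | h p =>
      show Quotient.mk'' (p.1, p.2 * (γ₁ * γ₂)⁻¹) = Quotient.mk'' (p.1, p.2 * γ₂⁻¹ * γ₁⁻¹)
      simp [mul_assoc]

end InducedAction

/-!
The `H`-orbit of `[y, g]` is `{[y, g h⁻¹] | h ∈ H}`. If `g ∈ H`, then `[y, g h⁻¹] = [π (h g⁻¹) y, 1]`,
so the orbit contains an injective copy `z ↦ [z, 1]` of the `H`-orbit of `y`. If `g ∉ H`, then
`[y, g h₁⁻¹] = [y, g h₂⁻¹]` forces `h₂⁻¹ h₁ ∈ H ∩ g⁻¹ H g`, which is finite by almost malnormality;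
so `h ↦ [y, g h⁻¹]` has finite fibres, and `H` is infinite since it has an infinite orbit on `Y`.
-/

theorem Set.infinite_range_of_finite_fibers {α β : Type*} [Infinite α] (f : α → β)
    (hf : ∀ a, (f ⁻¹' {f a}).Finite) : (Set.range f).Infinite := fun hrange =>
  Set.infinite_univ <| Set.Finite.of_finite_fibers f (Set.image_univ ▸ hrange) <| by
    rintro _ ⟨a, -, rfl⟩
    simpa using hf a

theorem HasInfiniteOrbits.infinite {G X : Type*} [Group G] {π : G →* Equiv.Perm X}
    (hπ : HasInfiniteOrbits π) (x : X) : Infinite G := by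
  by_contra hG
  rw [not_infinite_iff_finite] at hG
  exact hπ x (Set.finite_range _)

namespace IndSpace

variable {Γ : Type*} [Group Γ] {H : Subgroup Γ} {Y : Type*} {π : H →* Equiv.Perm Y}

theorem mk_eq_mk_iff {y y' : Y} {g g' : Γ} :
    (Quotient.mk'' (y, g) : IndSpace H π) = Quotient.mk'' (y', g') ↔
      ∃ h : H, π h y = y' ∧ (h : Γ) * g = g' :=
  Quotient.eq''

theorem indHom_mk (γ : Γ) (y : Y) (g : Γ) :
    indHom H π γ (Quotient.mk'' (y, g)) = Quotient.mk'' (y, g * γ⁻¹) :=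
  rfl

theorem mk_one_injective :
    Function.Injective fun y : Y => (Quotient.mk'' (y, 1) : IndSpace H π) := by
  intro y y' hyy'
  obtain ⟨h, hy, hh⟩ := mk_eq_mk_iff.mp hyy'
  obtain rfl : h = 1 := Subtype.ext (by simpa using hh)
  simpa using hy

theorem mk_apply_one (h : H) (y : Y) :
    (Quotient.mk'' (π h y, 1) : IndSpace H π) = Quotient.mk'' (y, (h : Γ)⁻¹) :=
  mk_eq_mk_iff.mpr ⟨h⁻¹, by simp, by simp⟩

theorem conj_mem_of_mk_mul_inv_eq {y : Y} {g : Γ} {h₁ h₂ : H}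
    (heq : (Quotient.mk'' (y, g * (h₁ : Γ)⁻¹) : IndSpace H π) =
      Quotient.mk'' (y, g * (h₂ : Γ)⁻¹)) :
    g * (h₂⁻¹ * h₁ : H) * g⁻¹ ∈ H := by
  obtain ⟨k, -, hk⟩ := mk_eq_mk_iff.mp heq
  convert k.2 using 1
  rw [eq_mul_inv_of_mul_eq hk]
  push_cast
  group

end IndSpace

open IndSpace in
theorem range_indHom_mk_infinite_of_mem {Γ Y : Type*} [Group Γ] {H : Subgroup Γ}
    {π : H →* Equiv.Perm Y} (hπ : HasInfiniteOrbits π) (y : Y) {g : Γ} (hg : g ∈ H) :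
    (Set.range fun h : H => indHom H π h (Quotient.mk'' (y, g))).Infinite := by
  refine ((hπ y).image mk_one_injective.injOn).mono ?_
  rintro _ ⟨_, ⟨k, rfl⟩, rfl⟩
  refine ⟨k * ⟨g, hg⟩, ?_⟩
  simp only [indHom_mk, mk_apply_one]
  congr 2
  push_cast
  group

open IndSpace in
theorem range_indHom_mk_infinite_of_finite_conj {Γ Y : Type*} [Group Γ] {H : Subgroup Γ}
    [Infinite H] {π : H →* Equiv.Perm Y} (y : Y) {g : Γ}
    (hg : {x : Γ | x ∈ H ∧ g * x * g⁻¹ ∈ H}.Finite) :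
    (Set.range fun h : H => indHom H π h (Quotient.mk'' (y, g))).Infinite := by
  refine Set.infinite_range_of_finite_fibers _ fun h₂ => ?_
  exact ((hg.preimage Subtype.val_injective.injOn).image (h₂ * ·)).subset fun h₁ hh₁ =>
    ⟨h₂⁻¹ * h₁, ⟨(h₂⁻¹ * h₁).2, conj_mem_of_mk_mul_inv_eq hh₁⟩, mul_inv_cancel_left h₂ h₁⟩

theorem induced_action_infinite_orbits_of_almost_malnormal_general
    {Γ Y : Type*} [Group Γ]
    (H : Subgroup Γ) (π : H →* Equiv.Perm Y)
    (hinf : HasInfiniteOrbits π)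
    (hmal : ∀ g : Γ, g ∉ H → {x : Γ | x ∈ H ∧ g * x * g⁻¹ ∈ H}.Finite) :
    HasInfiniteOrbits ((indHom H π).comp H.subtype) := by
  rintro ⟨⟨y, g⟩⟩
  by_cases hg : g ∈ H
  · exact range_indHom_mk_infinite_of_mem hinf y hg
  · have : Infinite H := hinf.infinite y
    exact range_indHom_mk_infinite_of_finite_conj y (hmal g hg)

/-- **Lemma 2.5 (3).**  Let `H ≤ Γ` be countable groups, `H ↷ Y` an action on a countable
set and `Γ ↷ X` the induced action.  If `H ↷ Y` has infinite orbits and `H` is almost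
malnormal in `Γ` then the restriction `H ↷ X` of the induced action has infinite
orbits. -/
theorem induced_action_infinite_orbits_of_almost_malnormal
    {Γ Y : Type*} [Group Γ] [Countable Γ] [Countable Y]
    (H : Subgroup Γ) (π : H →* Equiv.Perm Y)
    (hinf : HasInfiniteOrbits π)
    (hmal : ∀ g : Γ, g ∉ H → {x : Γ | x ∈ H ∧ g * x * g⁻¹ ∈ H}.Finite) :
    HasInfiniteOrbits ((indHom H π).comp H.subtype) :=
  induced_action_infinite_orbits_of_almost_malnormal_general H π hinf hmal
end

section
/- Let Γ = HNN(H,Σ,θ) be a non-trivial HNN-extension of a group H over a subgroup Σ ≤ H with injective homomorphism θ : Σ → H. Then for every g ∈ Γ \ H there exists s ∈ H such that gHg⁻¹ ∩ H ⊆ sΣs⁻¹ or gHg⁻¹ ∩ H ⊆ sθ(Σ)s⁻¹. In particular, if Σ is finite then H is almost malnormal in Γ. -/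
open HNNExtension HNNExtension.NormalWord

theorem chain'_dropLast_concat {α β : Type*} {R : α × β → α × β → Prop}
    (hR : ∀ (a b c : α × β), b.1 = c.1 → R a b → R a c) :
    ∀ (l : List (α × β)) (h : l ≠ []) (q : β),
      l.Chain' R → (l.dropLast ++ [((l.getLast h).1, q)]).Chain' R := by
  intro l
  induction l with
  | nil => simp
  | cons a l ih =>
    intro h q hc
    cases l with
    | nil => exact List.isChain_singleton _
    | cons b l' =>
      simp only [List.Chain'] at hc ih ⊢
      rw [List.isChain_cons_cons] at hc
      have h2 := ih (by simp) q hc.2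
      rw [List.dropLast_cons₂, List.getLast_cons (by simp)]
      rw [List.cons_append, List.isChain_cons]
      refine ⟨?_, h2⟩
      intro p hp
      have hfst : p.1 = b.1 := by
        cases l' with
        | nil => simp at hp; subst hp; rfl
        | cons c l'' =>
          rw [List.dropLast_cons₂, List.cons_append] at hp
          simp at hp; subst hp; rfl
      exact hR a b p hfst.symm hc.1

theorem hnn_key {G : Type*} [Group G] {A B : Subgroup G} {φ : A ≃* B}
    (w : ReducedWord G A B) (hne : w.toList ≠ [])
    (x x' : G)
    (h : HNNExtension.of x * w.prod φ = w.prod φ * HNNExtension.of x') :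
    w.head⁻¹ * x⁻¹ * w.head ∈ toSubgroup A B (-(w.toList.head hne).1) := by
  classical
  set p := w.toList.getLast hne with hp
  have hR : ∀ (a b c : ℤˣ × G), b.1 = c.1 →
      (a.2 ∈ toSubgroup A B a.1 → a.1 = b.1) →
      (a.2 ∈ toSubgroup A B a.1 → a.1 = c.1) :=
    fun a b c hbc hab hm => (hab hm).trans hbc
  let w₁ : ReducedWord G A B := ⟨x * w.head, w.toList, w.chain⟩
  let w₂ : ReducedWord G A B :=
    ⟨w.head, w.toList.dropLast ++ [(p.1, p.2 * x')],
      chain'_dropLast_concat hR w.toList hne (p.2 * x') w.chain⟩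
  have hsplit : w.toList.dropLast ++ [p] = w.toList := List.dropLast_append_getLast hne
  have hw₁ : w₁.prod φ = HNNExtension.of x * w.prod φ := by
    simp [w₁, ReducedWord.prod, mul_assoc]
  have hw₂ : w₂.prod φ = w.prod φ * HNNExtension.of x' := by
    simp only [ReducedWord.prod, w₂]
    conv_rhs => rw [← hsplit]
    simp [mul_assoc]
  have hprod : w₁.prod φ = w₂.prod φ := by rw [hw₁, hw₂, h]
  have hmain := (ReducedWord.map_fst_eq_and_of_prod_eq φ hprod).2
  have hu : (w.toList.head hne).1 ∈ w₁.toList.head?.map Prod.fst := by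
    show _ ∈ (w.toList.head?.map Prod.fst)
    rw [List.head?_eq_head hne]
    simp
  have := hmain _ hu
  show _ ∈ toSubgroup A B _
  convert this using 1
  simp only [w₁, w₂]
  group


/-- **Example 2.6 (1).**  Let `Γ = HNN(H, A, θ)` be an HNN-extension (`A ≤ H`, `θ : A ≃* B`
with `B = θ(A) ≤ H`), and identify `H` with its canonical image in `Γ`.  Then for every
`g ∈ Γ \ H` there is `s ∈ H` with `gHg⁻¹ ∩ H ⊆ sAs⁻¹` or `gHg⁻¹ ∩ H ⊆ sBs⁻¹`.
In particular, if `A` is finite then `H` is almost malnormal in `Γ`. -/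
theorem hnn_extension_conj_intersection_and_almost_malnormal
    {H : Type*} [Group H] (A B : Subgroup H) (θ : A ≃* B) :
    (∀ g : HNNExtension H A B θ,
      g ∉ (HNNExtension.of : H →* HNNExtension H A B θ).range →
      ∃ s ∈ (HNNExtension.of : H →* HNNExtension H A B θ).range,
        (∀ y : HNNExtension H A B θ,
            y ∈ (HNNExtension.of : H →* HNNExtension H A B θ).range →
            g⁻¹ * y * g ∈ (HNNExtension.of : H →* HNNExtension H A B θ).range →
            s⁻¹ * y * s ∈ A.map (HNNExtension.of : H →* HNNExtension H A B θ)) ∨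
        (∀ y : HNNExtension H A B θ,
            y ∈ (HNNExtension.of : H →* HNNExtension H A B θ).range →
            g⁻¹ * y * g ∈ (HNNExtension.of : H →* HNNExtension H A B θ).range →
            s⁻¹ * y * s ∈ B.map (HNNExtension.of : H →* HNNExtension H A B θ))) ∧
    (Finite A →
      ∀ g : HNNExtension H A B θ,
        g ∉ (HNNExtension.of : H →* HNNExtension H A B θ).range →
        {y : HNNExtension H A B θ |
          y ∈ (HNNExtension.of : H →* HNNExtension H A B θ).range ∧
          g * y * g⁻¹ ∈ (HNNExtension.of : H →* HNNExtension H A B θ).range}.Finite) := by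
  classical
  have part1 : ∀ g : HNNExtension H A B θ,
      g ∉ (HNNExtension.of : H →* HNNExtension H A B θ).range →
      ∃ s ∈ (HNNExtension.of : H →* HNNExtension H A B θ).range,
        (∀ y : HNNExtension H A B θ,
            y ∈ (HNNExtension.of : H →* HNNExtension H A B θ).range →
            g⁻¹ * y * g ∈ (HNNExtension.of : H →* HNNExtension H A B θ).range →
            s⁻¹ * y * s ∈ A.map (HNNExtension.of : H →* HNNExtension H A B θ)) ∨
        (∀ y : HNNExtension H A B θ,
            y ∈ (HNNExtension.of : H →* HNNExtension H A B θ).range →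
            g⁻¹ * y * g ∈ (HNNExtension.of : H →* HNNExtension H A B θ).range →
            s⁻¹ * y * s ∈ B.map (HNNExtension.of : H →* HNNExtension H A B θ)) := by
    intro g hg
    obtain ⟨d⟩ := HNNExtension.NormalWord.TransversalPair.nonempty H A B
    set w : NormalWord d := g • empty with hwdef
    have hprod : w.prod θ = g := by
      rw [hwdef, prod_smul, prod_empty, mul_one]
    have hne : w.toList ≠ [] := by
      intro h
      apply hg
      refine ⟨w.head, ?_⟩
      rw [← hprod]
      simp [ReducedWord.prod, h]
    refine ⟨HNNExtension.of w.head, ⟨w.head, rfl⟩, ?_⟩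
    have key : ∀ x x' : H,
        HNNExtension.of x' = g⁻¹ * HNNExtension.of x * g →
        w.head⁻¹ * x * w.head ∈ toSubgroup A B (-(w.toList.head hne).1) := by
      intro x x' hx'
      have h : HNNExtension.of x * w.toReducedWord.prod θ =
          w.toReducedWord.prod θ * HNNExtension.of x' := by
        rw [hx', hprod]
        group
      have := hnn_key w.toReducedWord hne x x' h
      have := inv_mem this
      convert this using 1
      group
    rcases Int.units_eq_one_or (w.toList.head hne).1 with h1 | h1
    · right
      rintro y ⟨x, rfl⟩ hy
      obtain ⟨x', hx'⟩ := hy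
      have := key x x' hx'
      rw [h1] at this
      refine ⟨w.head⁻¹ * x * w.head, this, by simp [map_mul, mul_assoc]⟩
    · left
      rintro y ⟨x, rfl⟩ hy
      obtain ⟨x', hx'⟩ := hy
      have := key x x' hx'
      rw [h1, neg_neg] at this
      refine ⟨w.head⁻¹ * x * w.head, this, by simp [map_mul, mul_assoc]⟩
  refine ⟨part1, ?_⟩
  intro hA g hg
  have hginv : g⁻¹ ∉ (HNNExtension.of : H →* HNNExtension H A B θ).range := by
    intro h
    exact hg (by simpa using inv_mem h)
  obtain ⟨s, hs, hcase⟩ := part1 g⁻¹ hginv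
  have hB : Finite B := Finite.of_equiv A θ.toEquiv
  have hAfin : ((A.map (HNNExtension.of : H →* HNNExtension H A B θ) :
      Subgroup (HNNExtension H A B θ)) : Set (HNNExtension H A B θ)).Finite := by
    rw [Subgroup.coe_map]
    exact Set.Finite.image _ (A : Set H).toFinite
  have hBfin : ((B.map (HNNExtension.of : H →* HNNExtension H A B θ) :
      Subgroup (HNNExtension H A B θ)) : Set (HNNExtension H A B θ)).Finite := by
    rw [Subgroup.coe_map]
    exact Set.Finite.image _ (B : Set H).toFinite
  rcases hcase with hc | hc
  · refine Set.Finite.subset (hAfin.image (fun z => s * z * s⁻¹)) ?_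
    rintro y ⟨hy1, hy2⟩
    refine ⟨s⁻¹ * y * s, hc y hy1 (by simpa using hy2), by group⟩
  · refine Set.Finite.subset (hBfin.image (fun z => s * z * s⁻¹)) ?_
    rintro y ⟨hy1, hy2⟩
    refine ⟨s⁻¹ * y * s, hc y hy1 (by simpa using hy2), by group⟩
end

section
/- Let Γ = Γ_1 *_Σ Γ_2 be a non-trivial amalgamated free product. Then: (i) for each i = 1,2 and every g ∈ Γ \ Γ_i there exists s ∈ Γ_i such that gΓ_ig⁻¹ ∩ Γ_i ⊆ sΣs⁻¹ (in particular Γ_i is almost malnormal in Γ when Σ is finite); (ii) for every g ∈ Γ there exists s ∈ Γ_1 such that gΓ_2g⁻¹ ∩ Γ_1 ⊆ sΣs⁻¹. -/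
section AmalgamSetup

universe u

variable (Γ₁ Γ₂ : Type u) [Group Γ₁] [Group Γ₂]

/-- The `Bool`-indexed family consisting of the two groups `Γ₁` and `Γ₂`. -/
def AmalgFam : Bool → Type u := fun b => cond b Γ₁ Γ₂

instance : ∀ b, Group (AmalgFam Γ₁ Γ₂ b)
  | true => ‹Group Γ₁›
  | false => ‹Group Γ₂›

variable {Γ₁ Γ₂} {S : Type u} [Group S]

/-- The two structure maps of the amalgam, as a `Bool`-indexed family of homomorphisms. -/
def amalgMaps (f₁ : S →* Γ₁) (f₂ : S →* Γ₂) : ∀ b : Bool, S →* AmalgFam Γ₁ Γ₂ b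
  | true => f₁
  | false => f₂

/-- The amalgamated free product `Γ₁ *_S Γ₂` along `f₁ : S →* Γ₁` and `f₂ : S →* Γ₂`,
realized as the pushout. -/
abbrev AmalgProd (f₁ : S →* Γ₁) (f₂ : S →* Γ₂) : Type _ :=
  Monoid.PushoutI (amalgMaps f₁ f₂)

/-- The canonical map `Γ₁ →* Γ₁ *_S Γ₂`. -/
abbrev amalgInl (f₁ : S →* Γ₁) (f₂ : S →* Γ₂) : Γ₁ →* AmalgProd f₁ f₂ :=
  Monoid.PushoutI.of (φ := amalgMaps f₁ f₂) true

/-- The canonical map `Γ₂ →* Γ₁ *_S Γ₂`. -/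
abbrev amalgInr (f₁ : S →* Γ₁) (f₂ : S →* Γ₂) : Γ₂ →* AmalgProd f₁ f₂ :=
  Monoid.PushoutI.of (φ := amalgMaps f₁ f₂) false

end AmalgamSetup

/-! Write `g = s * w` with `s ∈ Γᵢ` and `w` a reduced word (no letter in the base) whose first
letter is not in `Γᵢ`. If `y ∈ Γᵢ` and `c = s⁻¹ y s` is not in the base, then `w⁻¹ c w` is again a
reduced word, of length `2|w| + 1`; by the normal form theorem two reduced words with the same
product have the same index sequence, so `w⁻¹ c w` lies in some `Γⱼ` only if `w` is empty. Then
`g = s ∈ Γᵢ`, which is excluded when `j = i`, and for `j ≠ i` one uses `Γᵢ ∩ Γⱼ = Σ`. -/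

namespace Monoid.PushoutI

open Function Monoid.CoprodI

variable {ι : Type*} {G : ι → Type*} [∀ i, Group (G i)] {H : Type*} [Group H]
  {φ : ∀ i, H →* G i}

theorem NormalWord.reduced {d : NormalWord.Transversal φ} (w : NormalWord d) :
    Reduced φ w.toWord := by
  rintro ⟨i, g⟩ hg hgφ
  have hsnd := (d.compl i).equiv_snd_eq_self_of_mem_of_one_mem (one_mem _)
    (w.normalized i _ hg)
  rw [(d.compl i).equiv_snd_eq_one_of_mem_of_one_mem (d.one_mem i) hgφ] at hsnd
  exact w.ne_one _ hg (Subtype.ext_iff.1 hsnd).symm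

theorem Reduced.map_fst_eq_of_prod_eq (hφ : ∀ i, Injective (φ i)) {w₁ w₂ : Word G}
    (hw₁ : Reduced φ w₁) (hw₂ : Reduced φ w₂)
    (h : ofCoprodI (φ := φ) w₁.prod = ofCoprodI w₂.prod) :
    w₁.toList.map Sigma.fst = w₂.toList.map Sigma.fst := by
  obtain ⟨d⟩ := NormalWord.transversal_nonempty φ hφ
  obtain ⟨v₁, hv₁, hl₁⟩ := hw₁.exists_normalWord_prod_eq d
  obtain ⟨v₂, hv₂, hl₂⟩ := hw₂.exists_normalWord_prod_eq d
  rw [← hl₁, ← hl₂, NormalWord.prod_injective (hv₁.trans (h.trans hv₂.symm))]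

theorem Reduced.length_le_one_of_mem_range (hφ : ∀ i, Injective (φ i)) {w : Word G}
    (hw : Reduced φ w) {j : ι} (h : ofCoprodI w.prod ∈ (of (φ := φ) j).range) :
    w.toList.length ≤ 1 := by
  obtain ⟨x, hx⟩ := h
  by_cases hxφ : x ∈ (φ j).range
  · obtain ⟨t, rfl⟩ := hxφ
    rw [hw.eq_empty_of_mem_range hφ ⟨t, by rw [← hx, of_apply_eq_base]⟩]
    simp [Word.empty]
  · have hx1 : x ≠ 1 := fun h => hxφ (h ▸ one_mem _)
    let u := (NeWord.singleton x hx1).toWord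
    have hu : Reduced φ u := by simpa [Reduced, u, NeWord.toWord] using hxφ
    have hw_u := hw.map_fst_eq_of_prod_eq hφ hu <| by
      rw [← hx, ← ofCoprodI_of]
      exact congrArg ofCoprodI (NeWord.prod_singleton x hx1).symm
    have := congrArg List.length hw_u
    simp only [List.length_map, u, NeWord.toWord, NeWord.toList, List.length_singleton] at this
    exact this.le

theorem NeWord.reduced_inv {i j : ι} {w : NeWord G i j} (hw : Reduced φ w.toWord) :
    Reduced φ w.inv.toWord := by
  induction w with
  | singleton x hx =>
    simp only [Reduced, NeWord.toWord, NeWord.inv, NeWord.toList, List.mem_singleton,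
      forall_eq] at hw ⊢
    exact fun h => hw (inv_mem_iff.1 h)
  | append w₁ hne w₂ ih₁ ih₂ =>
    simp only [Reduced, NeWord.toWord, NeWord.toList, List.mem_append, NeWord.inv] at hw ⊢
    rintro l (hl | hl)
    · exact ih₂ (fun l hl => hw l (.inr hl)) l hl
    · exact ih₁ (fun l hl => hw l (.inl hl)) l hl

theorem conj_reduced_notMem_of_range (hφ : ∀ i, Injective (φ i)) {i j k l : ι} (w : NeWord G k l)
    (hw : Reduced φ w.toWord) (hki : k ≠ i) {c : G i} (hc : c ∉ (φ i).range) :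
    (ofCoprodI w.prod)⁻¹ * of (φ := φ) i c * ofCoprodI w.prod ∉ (of (φ := φ) j).range := by
  have hc1 : c ≠ 1 := fun h => hc (h ▸ one_mem _)
  let u := w.inv.append hki ((NeWord.singleton c hc1).append hki.symm w)
  have hu : Reduced φ u.toWord := by
    have hinv := NeWord.reduced_inv hw
    simp only [Reduced, u, NeWord.toWord, NeWord.toList, List.mem_append,
      List.mem_singleton] at hw hinv ⊢
    rintro l (hl | rfl | hl)
    exacts [hinv l hl, hc, hw l hl]
  have hu_prod : ofCoprodI u.prod = (ofCoprodI w.prod)⁻¹ * of (φ := φ) i c * ofCoprodI w.prod := by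
    simp [u, mul_assoc]
  intro h
  have hlen := hu.length_le_one_of_mem_range hφ (hu_prod ▸ h)
  have := List.length_pos_of_ne_nil w.toList_ne_nil
  simp only [u, NeWord.toWord, NeWord.toList, List.length_append, List.length_singleton] at hlen
  omega

theorem exists_mem_of_range_mul_reduced (hφ : ∀ i, Injective (φ i)) (g : PushoutI φ) (i : ι) :
    ∃ s ∈ (of (φ := φ) i).range, ∃ w : Word G,
      Reduced φ w ∧ w.fstIdx ≠ some i ∧ g = s * ofCoprodI w.prod := by
  classical
  obtain ⟨d⟩ := NormalWord.transversal_nonempty φ hφ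
  set v := NormalWord.equiv (d := d) g
  set p := Word.equivPair i v.toWord
  refine ⟨base φ v.head * of i p.head, mul_mem ⟨φ i v.head, of_apply_eq_base φ i _⟩ ⟨_, rfl⟩,
    p.tail, fun l hl => v.reduced l (Word.mem_of_mem_equivPair_tail _ hl), p.fstIdx_ne, ?_⟩
  calc g = base φ v.head * ofCoprodI v.toWord.prod := (NormalWord.equiv.symm_apply_apply g).symm
    _ = base φ v.head * ofCoprodI (Word.rcons p).prod := by
      rw [← Word.equivPair_symm, Equiv.symm_apply_apply]
    _ = _ := by rw [Word.prod_rcons, map_mul, ofCoprodI_of, mul_assoc]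

theorem exists_of_range_inter_conj_subset_conj_base (hφ : ∀ i, Injective (φ i)) {i j : ι}
    (g : PushoutI φ) (hg : i = j → g ∉ (of (φ := φ) i).range) :
    ∃ s ∈ (of (φ := φ) i).range, ∀ y ∈ (of (φ := φ) i).range,
      g⁻¹ * y * g ∈ (of (φ := φ) j).range → s⁻¹ * y * s ∈ (base φ).range := by
  obtain ⟨s, hs, w, hw, hfst, rfl⟩ := exists_mem_of_range_mul_reduced hφ g i
  refine ⟨s, hs, fun y hy hconj => ?_⟩
  have hsys : s⁻¹ * y * s ∈ (of (φ := φ) i).range := mul_mem (mul_mem (inv_mem hs) hy) hs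
  by_cases hw_empty : w = Word.empty
  · subst hw_empty
    simp only [Word.prod_empty, map_one, mul_one] at hg hconj
    rw [← inf_of_range_eq_base_range hφ fun hij => hg hij hs]
    exact ⟨hsys, hconj⟩
  obtain ⟨k, l, w, rfl⟩ := NeWord.of_word w hw_empty
  have hki : k ≠ i := fun hki => hfst (by simp [Word.fstIdx, NeWord.toWord, hki])
  by_contra hbase
  obtain ⟨c, hc⟩ := hsys
  have hcφ : c ∉ (φ i).range := by
    rintro ⟨t, rfl⟩
    exact hbase ⟨t, by rw [← hc, of_apply_eq_base]⟩
  refine conj_reduced_notMem_of_range hφ w hw hki hcφ (j := j) ?_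
  rw [hc]
  convert hconj using 1
  simp only [NeWord.prod]
  group

theorem finite_of_range_inter_conj [Finite H] (hφ : ∀ i, Injective (φ i)) {i : ι}
    {g : PushoutI φ} (hg : g ∉ (of (φ := φ) i).range) :
    {y | y ∈ (of (φ := φ) i).range ∧ g * y * g⁻¹ ∈ (of (φ := φ) i).range}.Finite := by
  obtain ⟨s, -, hs⟩ :=
    exists_of_range_inter_conj_subset_conj_base hφ (j := i) g⁻¹ fun _ => by simpa using hg
  refine (Set.finite_range fun t : H => s * base φ t * s⁻¹).subset ?_
  rintro y ⟨hy, hconj⟩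
  obtain ⟨t, ht⟩ := hs y hy (by simpa using hconj)
  exact ⟨t, show s * base φ t * s⁻¹ = y by rw [ht]; group⟩

end Monoid.PushoutI

theorem amalgamated_product_conj_intersections_general
    {Γ₁ Γ₂ S : Type} [Group Γ₁] [Group Γ₂] [Group S]
    (f₁ : S →* Γ₁) (f₂ : S →* Γ₂)
    (hf₁ : Function.Injective f₁) (hf₂ : Function.Injective f₂) :
    -- (i) for `Γ₁`:
    ((∀ g : AmalgProd f₁ f₂, g ∉ (amalgInl f₁ f₂).range →
      ∃ s ∈ (amalgInl f₁ f₂).range,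
        ∀ y : AmalgProd f₁ f₂, y ∈ (amalgInl f₁ f₂).range →
          g⁻¹ * y * g ∈ (amalgInl f₁ f₂).range →
          s⁻¹ * y * s ∈ (Monoid.PushoutI.base (amalgMaps f₁ f₂)).range) ∧
    -- (i) for `Γ₂`:
    (∀ g : AmalgProd f₁ f₂, g ∉ (amalgInr f₁ f₂).range →
      ∃ s ∈ (amalgInr f₁ f₂).range,
        ∀ y : AmalgProd f₁ f₂, y ∈ (amalgInr f₁ f₂).range →
          g⁻¹ * y * g ∈ (amalgInr f₁ f₂).range →
          s⁻¹ * y * s ∈ (Monoid.PushoutI.base (amalgMaps f₁ f₂)).range) ∧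
    -- (i), `In particular`: almost malnormality when `S` is finite:
    (Finite S →
      (∀ g : AmalgProd f₁ f₂, g ∉ (amalgInl f₁ f₂).range →
        {y : AmalgProd f₁ f₂ | y ∈ (amalgInl f₁ f₂).range ∧
          g * y * g⁻¹ ∈ (amalgInl f₁ f₂).range}.Finite) ∧
      (∀ g : AmalgProd f₁ f₂, g ∉ (amalgInr f₁ f₂).range →
        {y : AmalgProd f₁ f₂ | y ∈ (amalgInr f₁ f₂).range ∧
          g * y * g⁻¹ ∈ (amalgInr f₁ f₂).range}.Finite))) ∧
    -- (ii):
    (∀ g : AmalgProd f₁ f₂,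
      ∃ s ∈ (amalgInl f₁ f₂).range,
        ∀ y : AmalgProd f₁ f₂, y ∈ (amalgInl f₁ f₂).range →
          g⁻¹ * y * g ∈ (amalgInr f₁ f₂).range →
          s⁻¹ * y * s ∈ (Monoid.PushoutI.base (amalgMaps f₁ f₂)).range) := by
  open Monoid.PushoutI in
  have hφ : ∀ b, Function.Injective (amalgMaps f₁ f₂ b) := fun b => b.rec hf₂ hf₁
  refine ⟨⟨fun g hg => ?_, fun g hg => ?_, fun _ => ⟨fun g hg => ?_, fun g hg => ?_⟩⟩, fun g => ?_⟩
  · exact exists_of_range_inter_conj_subset_conj_base hφ g fun _ => hg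
  · exact exists_of_range_inter_conj_subset_conj_base hφ g fun _ => hg
  · exact finite_of_range_inter_conj hφ hg
  · exact finite_of_range_inter_conj hφ hg
  · exact exists_of_range_inter_conj_subset_conj_base hφ g (absurd · Bool.noConfusion)

/-- **Example 2.6 (2).**  Let `Γ = Γ₁ *_S Γ₂` be a non-trivial amalgamated free product
(`f₁ : S →* Γ₁`, `f₂ : S →* Γ₂` injective and non-surjective), with `Γ₁`, `Γ₂` and `S`
identified with their canonical images in `Γ`.  Then:
(i) for each `i = 1, 2` and every `g ∈ Γ \ Γᵢ` there is `s ∈ Γᵢ` with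
`gΓᵢg⁻¹ ∩ Γᵢ ⊆ sSs⁻¹` (in particular `Γᵢ` is almost malnormal in `Γ` when `S` is
finite); (ii) for every `g ∈ Γ` there is `s ∈ Γ₁` with `gΓ₂g⁻¹ ∩ Γ₁ ⊆ sSs⁻¹`. -/
theorem amalgamated_product_conj_intersections
    {Γ₁ Γ₂ S : Type} [Group Γ₁] [Group Γ₂] [Group S]
    (f₁ : S →* Γ₁) (f₂ : S →* Γ₂)
    (hf₁ : Function.Injective f₁) (hf₂ : Function.Injective f₂)
    (hnt₁ : ¬ Function.Surjective f₁) (hnt₂ : ¬ Function.Surjective f₂) :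
    -- (i) for `Γ₁`:
    ((∀ g : AmalgProd f₁ f₂, g ∉ (amalgInl f₁ f₂).range →
      ∃ s ∈ (amalgInl f₁ f₂).range,
        ∀ y : AmalgProd f₁ f₂, y ∈ (amalgInl f₁ f₂).range →
          g⁻¹ * y * g ∈ (amalgInl f₁ f₂).range →
          s⁻¹ * y * s ∈ (Monoid.PushoutI.base (amalgMaps f₁ f₂)).range) ∧
    -- (i) for `Γ₂`:
    (∀ g : AmalgProd f₁ f₂, g ∉ (amalgInr f₁ f₂).range →
      ∃ s ∈ (amalgInr f₁ f₂).range,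
        ∀ y : AmalgProd f₁ f₂, y ∈ (amalgInr f₁ f₂).range →
          g⁻¹ * y * g ∈ (amalgInr f₁ f₂).range →
          s⁻¹ * y * s ∈ (Monoid.PushoutI.base (amalgMaps f₁ f₂)).range) ∧
    -- (i), `In particular`: almost malnormality when `S` is finite:
    (Finite S →
      (∀ g : AmalgProd f₁ f₂, g ∉ (amalgInl f₁ f₂).range →
        {y : AmalgProd f₁ f₂ | y ∈ (amalgInl f₁ f₂).range ∧
          g * y * g⁻¹ ∈ (amalgInl f₁ f₂).range}.Finite) ∧
      (∀ g : AmalgProd f₁ f₂, g ∉ (amalgInr f₁ f₂).range →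
        {y : AmalgProd f₁ f₂ | y ∈ (amalgInr f₁ f₂).range ∧
          g * y * g⁻¹ ∈ (amalgInr f₁ f₂).range}.Finite))) ∧
    -- (ii):
    (∀ g : AmalgProd f₁ f₂,
      ∃ s ∈ (amalgInl f₁ f₂).range,
        ∀ y : AmalgProd f₁ f₂, y ∈ (amalgInl f₁ f₂).range →
          g⁻¹ * y * g ∈ (amalgInr f₁ f₂).range →
          s⁻¹ * y * s ∈ (Monoid.PushoutI.base (amalgMaps f₁ f₂)).range) :=
  amalgamated_product_conj_intersections_general f₁ f₂ hf₁ hf₂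
end

section
/- Let X be an infinite countable set, H ≤ S(X) a countable subgroup, Σ ≤ H a finite subgroup and θ : Σ → H an injective homomorphism such that Σ and θ(Σ) act freely on X, and let Z and π_w be as defined. If the action H ↷ X has infinite orbits, then the set U = {w ∈ Z : π_w is transitive} is a dense G_δ subset of Z. -/
/-- The topology of pointwise convergence on the group `S(X)` of all bijections of a
(discrete, countable) set `X`:  `wₙ → w` iff for every finite `F ⊆ X` eventually
`wₙ|_F = w|_F`. -/
noncomputable instance permPointwiseTopology (X : Type*) :
    TopologicalSpace (Equiv.Perm X) :=
  TopologicalSpace.induced (fun w : Equiv.Perm X => (w : X → X))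
    (@Pi.topologicalSpace X (fun _ => X) (fun _ => ⊥))

section HNNBaire

variable {X : Type*} (H : Subgroup (Equiv.Perm X)) (A B : Subgroup H) (θ : A ≃* B)

/-- The set `Z = {w ∈ S(X) : w σ w⁻¹ = θ(σ) for all σ ∈ A}`. -/
def hnnZ : Set (Equiv.Perm X) :=
  {w | ∀ a : A, w * ((a : H) : Equiv.Perm X) * w⁻¹ = (((θ a : B) : H) : Equiv.Perm X)}

/-- For `w ∈ Z`, the homomorphism `π_w : HNN(H, A, θ) →* S(X)` determined by
`π_w(t) = w` and `π_w(h) = h` for `h ∈ H`. -/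
def hnnPi (w : hnnZ H A B θ) : HNNExtension H A B θ →* Equiv.Perm X :=
  HNNExtension.lift H.subtype w.1 (fun a => by
    have h := w.2 a
    calc w.1 * H.subtype a = w.1 * ((a : H) : Equiv.Perm X) * w.1⁻¹ * w.1 := by
          show w.1 * ((a : H) : Equiv.Perm X) = _
          group
      _ = H.subtype ((θ a : B) : H) * w.1 := by rw [h]; rfl)

end HNNBaire

open Topology

namespace Equiv.Perm

variable {X : Type*}

theorem continuous_iff_isOpen_setOf_apply_eq {Y : Type*} [TopologicalSpace Y] {f : Y → Perm X} :
    Continuous f ↔ ∀ x y, IsOpen {t | f t x = y} := by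
  let _ : TopologicalSpace X := ⊥
  have := discreteTopology_bot X
  simp only [continuous_induced_rng, continuous_pi_iff, continuous_discrete_rng]
  rfl

theorem isOpen_setOf_apply_eq (x y : X) : IsOpen {w : Perm X | w x = y} :=
  continuous_iff_isOpen_setOf_apply_eq.1 continuous_id x y

theorem exists_finset_of_mem_nhds {w₀ : Perm X} {U : Set (Perm X)} (hU : U ∈ 𝓝 w₀) :
    ∃ I : Finset X, ∀ w : Perm X, Set.EqOn w w₀ I → w ∈ U := by
  let _ : TopologicalSpace X := ⊥
  have := discreteTopology_bot X
  rw [nhds_induced, nhds_pi, Filter.mem_comap] at hU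
  obtain ⟨V, hV, hVU⟩ := hU
  obtain ⟨I, t, ht, hIt⟩ := Filter.mem_pi'.1 hV
  simp only [nhds_discrete, Filter.mem_pure] at ht
  exact ⟨I, fun w hw => hVU (hIt fun i hi => by simpa [hw hi] using ht i)⟩

instance : IsTopologicalGroup (Perm X) where
  continuous_mul := continuous_iff_isOpen_setOf_apply_eq.2 fun x y => by
    have : {p : Perm X × Perm X | (p.1 * p.2) x = y} =
        ⋃ z, (Prod.snd ⁻¹' {w | w x = z}) ∩ (Prod.fst ⁻¹' {v | v z = y}) := by
      ext p; simp
    rw [this]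
    exact isOpen_iUnion fun z => ((isOpen_setOf_apply_eq x z).preimage continuous_snd).inter
      ((isOpen_setOf_apply_eq z y).preimage continuous_fst)
  continuous_inv := continuous_iff_isOpen_setOf_apply_eq.2 fun x y => by
    convert isOpen_setOf_apply_eq y x using 3 with t
    exact Perm.inv_eq_iff_eq.trans eq_comm

instance : T2Space (Perm X) :=
  letI : TopologicalSpace X := ⊥
  haveI := discreteTopology_bot X
  (IsEmbedding.mk ⟨rfl⟩ (DFunLike.coe_injective (F := Perm X))).t2Space

instance [Countable X] : PolishSpace (Perm X) := by
  let _ : TopologicalSpace X := ⊥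
  have := discreteTopology_bot X
  have : PolishSpace X := inferInstance
  let e : Perm X → (X → X) × (X → X) := fun w => (w, ⇑w⁻¹)
  have he : Continuous e :=
    continuous_induced_dom.prodMk (continuous_induced_dom.comp continuous_inv)
  let S (z u : X) : Set ((X → X) × (X → X)) := {p | p.2 z = u → p.1 u = z}
  have hrange : Set.range e = ⋂ z, ⋂ u, S z u ∩ Prod.swap ⁻¹' S z u := by
    ext p
    simp only [S, Set.mem_range, Set.mem_iInter, Set.mem_inter_iff, Set.mem_preimage,
      Set.mem_ofPred_eq, Prod.fst_swap, Prod.snd_swap, forall_and, forall_eq']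
    refine ⟨?_, fun h => ⟨⟨p.1, p.2, h.2, h.1⟩, rfl⟩⟩
    rintro ⟨w, rfl⟩
    exact ⟨w.apply_symm_apply, w.symm_apply_apply⟩
  have hclosed (z u : X) : IsClosed (S z u) := by
    simp only [S, imp_iff_not_or]
    exact ((isOpen_discrete {u}).preimage (by fun_prop)).isClosed_compl.union
      ((isClosed_discrete {z}).preimage (by fun_prop))
  refine IsClosedEmbedding.polishSpace (f := e) ⟨⟨.of_comp he continuous_fst ⟨rfl⟩, ?_⟩, ?_⟩
  · exact fun v w h => DFunLike.coe_injective (congrArg Prod.fst h)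
  · rw [hrange]
    exact isClosed_iInter fun z => isClosed_iInter fun u =>
      (hclosed z u).inter ((hclosed z u).preimage continuous_swap)

end Equiv.Perm

namespace MulAction

variable {G X : Type*} [Group G] [MulAction G X]

theorem smul_eq_smul_of_stabilizer_eq {p q : X} (hpq : stabilizer G p = stabilizer G q)
    {g g' : G} (h : g • p = g' • p) : g • q = g' • q := by
  have : g'⁻¹ * g ∈ stabilizer G p := by rw [mem_stabilizer_iff, mul_smul, h, inv_smul_smul]
  rwa [hpq, mem_stabilizer_iff, mul_smul, inv_smul_eq_iff] at this

theorem smul_mem_orbit_iff {g : G} {z p : X} : g • z ∈ orbit G p ↔ z ∈ orbit G p := by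
  rw [← orbit_eq_iff, orbit_smul, orbit_eq_iff]

-- The choice of `g` is harmless as soon as `p` and `q` have the same stabilizer.
variable (G) in
open Classical in
noncomputable def swapOrbits (p q z : X) : X :=
  if h : z ∈ orbit G p then (mem_orbit_iff.1 h).choose • q
  else if h : z ∈ orbit G q then (mem_orbit_iff.1 h).choose • p
  else z

variable {p q : X}

theorem swapOrbits_smul_left (hpq : stabilizer G p = stabilizer G q) (g : G) :
    swapOrbits G p q (g • p) = g • q := by
  have h : g • p ∈ orbit G p := mem_orbit p g
  rw [swapOrbits, dif_pos h]
  exact smul_eq_smul_of_stabilizer_eq hpq (mem_orbit_iff.1 h).choose_spec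

theorem swapOrbits_smul_right (hpq : stabilizer G p = stabilizer G q) (hq : q ∉ orbit G p)
    (g : G) : swapOrbits G p q (g • q) = g • p := by
  have h : g • q ∈ orbit G q := mem_orbit q g
  have h' : g • q ∉ orbit G p := mt smul_mem_orbit_iff.1 hq
  rw [swapOrbits, dif_neg h', dif_pos h]
  exact smul_eq_smul_of_stabilizer_eq hpq.symm (mem_orbit_iff.1 h).choose_spec

theorem swapOrbits_of_notMem {z : X} (hp : z ∉ orbit G p) (hq : z ∉ orbit G q) :
    swapOrbits G p q z = z := by
  rw [swapOrbits, dif_neg hp, dif_neg hq]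

theorem swapOrbits_smul (hpq : stabilizer G p = stabilizer G q) (hq : q ∉ orbit G p)
    (g : G) (z : X) : swapOrbits G p q (g • z) = g • swapOrbits G p q z := by
  by_cases hzp : z ∈ orbit G p
  · obtain ⟨g', rfl⟩ := hzp
    rw [smul_smul, swapOrbits_smul_left hpq, swapOrbits_smul_left hpq, mul_smul]
  by_cases hzq : z ∈ orbit G q
  · obtain ⟨g', rfl⟩ := hzq
    rw [smul_smul, swapOrbits_smul_right hpq hq, swapOrbits_smul_right hpq hq, mul_smul]
  rw [swapOrbits_of_notMem hzp hzq, swapOrbits_of_notMem] <;> rwa [smul_mem_orbit_iff]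

theorem swapOrbits_involutive (hpq : stabilizer G p = stabilizer G q) (hq : q ∉ orbit G p) :
    Function.Involutive (swapOrbits G p q) := by
  intro z
  by_cases hzp : z ∈ orbit G p
  · obtain ⟨g, rfl⟩ := hzp
    rw [swapOrbits_smul_left hpq, swapOrbits_smul_right hpq hq]
  by_cases hzq : z ∈ orbit G q
  · obtain ⟨g, rfl⟩ := hzq
    rw [swapOrbits_smul_right hpq hq, swapOrbits_smul_left hpq]
  rw [swapOrbits_of_notMem hzp hzq, swapOrbits_of_notMem hzp hzq]

end MulAction

section FamilyOfActions

variable {W G X : Type*} [Group G] {π : W → G →* Equiv.Perm X}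

theorem setOf_isTransitiveAction_eq_iInter :
    {w | IsTransitiveAction (π w)} = ⋂ q : X × X, {w | ∃ g, π w g q.1 = q.2} := by
  ext w
  simp only [Set.mem_iInter, Prod.forall]
  rfl

variable [TopologicalSpace W]

theorem isOpen_setOf_exists_apply_eq (hπ : ∀ g, Continuous fun w => π w g) (x y : X) :
    IsOpen {w | ∃ g, π w g x = y} := by
  simp only [Set.ofPred_exists]
  exact isOpen_iUnion fun g => (Equiv.Perm.isOpen_setOf_apply_eq x y).preimage (hπ g)

theorem isGδ_setOf_isTransitiveAction [Countable X] (hπ : ∀ g, Continuous fun w => π w g) :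
    IsGδ {w | IsTransitiveAction (π w)} := by
  rw [setOf_isTransitiveAction_eq_iInter]
  exact .iInter fun q => (isOpen_setOf_exists_apply_eq hπ q.1 q.2).isGδ

theorem dense_setOf_isTransitiveAction [Countable X] [BaireSpace W]
    (hπ : ∀ g, Continuous fun w => π w g) (hdense : ∀ x y, Dense {w | ∃ g, π w g x = y}) :
    Dense {w | IsTransitiveAction (π w)} := by
  rw [setOf_isTransitiveAction_eq_iInter]
  exact dense_iInter_of_isOpen (fun q => isOpen_setOf_exists_apply_eq hπ q.1 q.2)
    fun q => hdense q.1 q.2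

end FamilyOfActions

theorem HasInfiniteOrbits.exists_forall_smul_notMem {G K X : Type*} [Group G] [Group K]
    [Finite K] [MulAction K X] {π : G →* Equiv.Perm X} (hπ : HasInfiniteOrbits π) (x : X)
    {S : Set X} (hS : S.Finite) : ∃ g : G, ∀ k : K, k • π g x ∉ S := by
  obtain ⟨_, ⟨g, rfl⟩, hg⟩ := ((hπ x).sdiff ((Set.finite_univ (α := K)).smul hS)).nonempty
  refine ⟨g, fun k hk => hg ⟨k⁻¹, Set.mem_univ _, _, hk, inv_smul_smul k _⟩⟩

section HNN

open MulAction

variable {X : Type*} {H : Subgroup (Equiv.Perm X)} {A B : Subgroup H} {θ : A ≃* B}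

theorem mem_hnnZ_iff {w : Equiv.Perm X} :
    w ∈ hnnZ H A B θ ↔ ∀ (a : A) (z : X), w (a • z) = θ a • w z := by
  refine forall_congr' fun a => ?_
  rw [mul_inv_eq_iff_eq_mul, Equiv.Perm.ext_iff]
  rfl

theorem isClosed_hnnZ : IsClosed (hnnZ H A B θ) := by
  simp only [hnnZ, Set.ofPred_forall]
  exact isClosed_iInter fun a => isClosed_eq (by fun_prop) continuous_const

theorem continuous_hnnPi_apply (g : HNNExtension H A B θ) :
    Continuous fun w : hnnZ H A B θ => hnnPi H A B θ w g := by
  induction g using HNNExtension.induction_on with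
  | of h => simpa [hnnPi] using continuous_const
  | t => simpa [hnnPi] using continuous_subtype_val
  | mul g₁ g₂ ih₁ ih₂ =>
    simp only [map_mul]
    exact ih₁.mul ih₂
  | inv g ih =>
    simp only [map_inv]
    exact ih.inv


theorem exists_mem_hnnZ_eqOn_apply_eq [Finite A] (hfree : ∀ z : X, stabilizer B z = ⊥)
    (hinf : HasInfiniteOrbits H.subtype) {w₀ : Equiv.Perm X} (hw₀ : w₀ ∈ hnnZ H A B θ)
    (I : Finset X) (x y : X) :
    ∃ w ∈ hnnZ H A B θ, Set.EqOn w w₀ I ∧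
      ∃ h₁ h₂ : H, w ((h₁ : Equiv.Perm X) x) = (h₂ : Equiv.Perm X) y := by
  rw [mem_hnnZ_iff] at hw₀
  have : Finite B := Finite.of_equiv A θ.toEquiv
  obtain ⟨h₁, hAx⟩ := hinf.exists_forall_smul_notMem (K := A) x I.finite_toSet
  set p := w₀ (H.subtype h₁ x)
  obtain ⟨h₂, hBy⟩ :=
    hinf.exists_forall_smul_notMem (K := B) y ((I.finite_toSet.image w₀).insert p)
  set y' := H.subtype h₂ y
  have hstab : stabilizer B p = stabilizer B y' := by rw [hfree, hfree]
  have hy : y' ∉ orbit B p := by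
    rintro ⟨b, hb⟩
    exact hBy b⁻¹ (by rw [← hb, inv_smul_smul]; exact Set.mem_insert _ _)
  refine ⟨(swapOrbits_involutive hstab hy).toPerm * w₀, ?_, fun i (hi : i ∈ I) => ?_, h₁, h₂,
    ?_⟩
  · rw [mem_hnnZ_iff]
    intro a z
    simp [hw₀, swapOrbits_smul hstab hy]
  · refine swapOrbits_of_notMem ?_ ?_
    · rintro ⟨b, hb⟩
      have hmem : w₀ (θ.symm b • H.subtype h₁ x) = w₀ i := by
        rw [hw₀, MulEquiv.apply_symm_apply]
        exact hb
      exact hAx (θ.symm b) (w₀.injective hmem ▸ hi)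
    · rintro ⟨b, hb⟩
      exact hBy b (Set.mem_insert_of_mem _ ⟨i, hi, hb.symm⟩)
  · change swapOrbits B p y' p = y'
    simpa using swapOrbits_smul_left hstab (1 : B)

theorem dense_setOf_exists_hnnPi_apply_eq [Finite A] (hfree : ∀ z : X, stabilizer B z = ⊥)
    (hinf : HasInfiniteOrbits H.subtype) (x y : X) :
    Dense {w : hnnZ H A B θ | ∃ g, hnnPi H A B θ w g x = y} := by
  rw [dense_iff_inter_open]
  rintro _ ⟨V, hV, rfl⟩ ⟨w₀, hw₀V⟩
  obtain ⟨I, hI⟩ := Equiv.Perm.exists_finset_of_mem_nhds (hV.mem_nhds hw₀V)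
  obtain ⟨w, hwZ, hwI, h₁, h₂, hlink⟩ := exists_mem_hnnZ_eqOn_apply_eq hfree hinf w₀.2 I x y
  refine ⟨⟨w, hwZ⟩, hI w hwI, .of h₂⁻¹ * .t * .of h₁, ?_⟩
  simp [hnnPi, hlink]

end HNN

theorem hnn_transitive_dense_Gdelta_general
    {X : Type} [Countable X]
    (H : Subgroup (Equiv.Perm X))
    (A B : Subgroup H) [Finite A] (θ : A ≃* B)
    (hfreeB : ∀ b : B, b ≠ 1 → ∀ x : X, ((b : H) : Equiv.Perm X) x ≠ x)
    (hinf : HasInfiniteOrbits H.subtype) :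
    Dense {w : hnnZ H A B θ | IsTransitiveAction (hnnPi H A B θ w)} ∧
    IsGδ {w : hnnZ H A B θ | IsTransitiveAction (hnnPi H A B θ w)} := by
  have hstab (z : X) : MulAction.stabilizer B z = ⊥ :=
    (Subgroup.eq_bot_iff_forall _).2 fun b hb => by_contra fun hb1 => hfreeB b hb1 z hb
  have : PolishSpace (hnnZ H A B θ) := isClosed_hnnZ.polishSpace
  exact ⟨dense_setOf_isTransitiveAction continuous_hnnPi_apply
      (dense_setOf_exists_hnnPi_apply_eq hstab hinf),
    isGδ_setOf_isTransitiveAction continuous_hnnPi_apply⟩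

/-- **Lemma 3.1.**  Let `X` be an infinite countable set, `H ≤ S(X)` a countable
subgroup, `A ≤ H` a finite subgroup and `θ : A ≃* B` an isomorphism onto a subgroup
`B ≤ H` (an injective homomorphism `A → H`), such that `A` and `B` act freely on `X`.
If the action `H ↷ X` has infinite orbits, then
`U = {w ∈ Z : π_w is transitive}` is a dense `G_δ` subset of `Z`. -/
theorem hnn_transitive_dense_Gdelta
    {X : Type} [Countable X] [Infinite X]
    (H : Subgroup (Equiv.Perm X)) [Countable H]
    (A B : Subgroup H) [Finite A] (θ : A ≃* B)
    (hfreeA : ∀ a : A, a ≠ 1 → ∀ x : X, ((a : H) : Equiv.Perm X) x ≠ x)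
    (hfreeB : ∀ b : B, b ≠ 1 → ∀ x : X, ((b : H) : Equiv.Perm X) x ≠ x)
    (hinf : HasInfiniteOrbits H.subtype) :
    Dense {w : hnnZ H A B θ | IsTransitiveAction (hnnPi H A B θ w)} ∧
    IsGδ {w : hnnZ H A B θ | IsTransitiveAction (hnnPi H A B θ w)} :=
  hnn_transitive_dense_Gdelta_general H A B θ hfreeB hinf
end
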